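/- Let N_{1|0} : M_{d₀}(ℂ) → M_{d₁}(ℂ) and N_{2|0} : M_{d₀}(ℂ) → M_{d₂}(ℂ) be completely positive trace-preserving maps, with ϱ_{1|0} and ϱ_{2|0} the partial transposes on the first factor of their Jamiołkowski images. Then there exists a completely positive trace-preserving intermediate map N_{2|1} : M_{d₁}(ℂ) → M_{d₂}(ℂ) with N_{2|0} = N_{2|1} ∘ N_{1|0} if and only if there exists a positive semidefinite matrix ϱ_{2|1} ∈ M_{d₁}(ℂ) ⊗ M_{d₂}(ℂ) with Tr_{H₂}[ϱ_{2|1}] = 𝟙_{d₁} such that ϱ_{2|0} = Tr_{H₁}[ (𝟙_{d₀} ⊗ ϱ_{2|1})^{T_{H₁}} (ϱ_{1|0} ⊗ 𝟙_{d₂}) ], where T_{H₁} denotes partial transposition on the middle factor of M_{d₀}(ℂ) ⊗ M_{d₁}(ℂ) ⊗ M_{d₂}(ℂ) and Tr_{H₁}, Tr_{H₂} are partial traces over the indicated factors. -/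

import Mathlib

open Matrix Kronecker
open scoped ComplexOrder

noncomputable section

/-- Jamiołkowski image of a linear map `N : M_a(ℂ) → M_b(ℂ)`:
`ρ = Σ_{i,j} |i⟩⟨j| ⊗ N(|j⟩⟨i|)`. -/
def jamImage {a b : ℕ} (N : Matrix (Fin a) (Fin a) ℂ →ₗ[ℂ] Matrix (Fin b) (Fin b) ℂ) :
    Matrix (Fin a × Fin b) (Fin a × Fin b) ℂ :=
  ∑ i : Fin a, ∑ j : Fin a,
    Matrix.single i j (1 : ℂ) ⊗ₖ N (Matrix.single j i (1 : ℂ))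

/-- Partial transpose on the first tensor factor of `M_a(ℂ) ⊗ M_b(ℂ)`. -/
def ptransposeA {a b : ℕ} (ρ : Matrix (Fin a × Fin b) (Fin a × Fin b) ℂ) :
    Matrix (Fin a × Fin b) (Fin a × Fin b) ℂ :=
  Matrix.of fun p q => ρ (q.1, p.2) (p.1, q.2)

/-- Partial trace over the second tensor factor. -/
def ptraceB {a b : ℕ} (ρ : Matrix (Fin a × Fin b) (Fin a × Fin b) ℂ) :
    Matrix (Fin a) (Fin a) ℂ :=
  Matrix.of fun i j => ∑ k : Fin b, ρ (i, k) (j, k)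

/-- Partial trace over the first tensor factor. -/
def ptraceA {a b : ℕ} (ρ : Matrix (Fin a × Fin b) (Fin a × Fin b) ℂ) :
    Matrix (Fin b) (Fin b) ℂ :=
  Matrix.of fun k l => ∑ i : Fin a, ρ (i, k) (i, l)

/-- The extension `id_n ⊗ Φ` of a map `Φ` on matrices, acting on `M_n(ℂ) ⊗ M_a(ℂ)`. -/
def idTensor {n a b : ℕ} (Φ : Matrix (Fin a) (Fin a) ℂ → Matrix (Fin b) (Fin b) ℂ)
    (X : Matrix (Fin n × Fin a) (Fin n × Fin a) ℂ) :
    Matrix (Fin n × Fin b) (Fin n × Fin b) ℂ :=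
  Matrix.of fun p q => Φ (Matrix.of fun i j => X (p.1, i) (q.1, j)) p.2 q.2

/-- Complete positivity: every identity extension `id_n ⊗ Φ` preserves positive
semidefiniteness. -/
def IsCP {a b : ℕ} (Φ : Matrix (Fin a) (Fin a) ℂ → Matrix (Fin b) (Fin b) ℂ) : Prop :=
  ∀ (n : ℕ) (X : Matrix (Fin n × Fin a) (Fin n × Fin a) ℂ),
    X.PosSemidef → (idTensor Φ X).PosSemidef

/-- Trace preservation. -/
def IsTP {a b : ℕ} (Φ : Matrix (Fin a) (Fin a) ℂ → Matrix (Fin b) (Fin b) ℂ) : Prop :=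
  ∀ σ, (Φ σ).trace = σ.trace

/-- Embedding `𝟙_{d₀} ⊗ B` of `B ∈ M_{d₁}(ℂ) ⊗ M_{d₂}(ℂ)` into the three-factor space. -/
def emb12 {d₀ d₁ d₂ : ℕ} (B : Matrix (Fin d₁ × Fin d₂) (Fin d₁ × Fin d₂) ℂ) :
    Matrix (Fin d₀ × Fin d₁ × Fin d₂) (Fin d₀ × Fin d₁ × Fin d₂) ℂ :=
  (1 : Matrix (Fin d₀) (Fin d₀) ℂ) ⊗ₖ B

/-- Embedding `B ⊗ 𝟙_{d₂}` of `B ∈ M_{d₀}(ℂ) ⊗ M_{d₁}(ℂ)` into the three-factor space. -/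
def emb01 {d₀ d₁ d₂ : ℕ} (B : Matrix (Fin d₀ × Fin d₁) (Fin d₀ × Fin d₁) ℂ) :
    Matrix (Fin d₀ × Fin d₁ × Fin d₂) (Fin d₀ × Fin d₁ × Fin d₂) ℂ :=
  Matrix.of fun p q => B (p.1, p.2.1) (q.1, q.2.1) * (if p.2.2 = q.2.2 then 1 else 0)

/-- Partial transposition on the middle factor of the three-factor space. -/
def ptransposeMid {d₀ d₁ d₂ : ℕ}
    (A : Matrix (Fin d₀ × Fin d₁ × Fin d₂) (Fin d₀ × Fin d₁ × Fin d₂) ℂ) :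
    Matrix (Fin d₀ × Fin d₁ × Fin d₂) (Fin d₀ × Fin d₁ × Fin d₂) ℂ :=
  Matrix.of fun p q => A (p.1, q.2.1, p.2.2) (q.1, p.2.1, q.2.2)

/-- Partial trace over the middle factor of the three-factor space. -/
def ptraceMid {d₀ d₁ d₂ : ℕ}
    (A : Matrix (Fin d₀ × Fin d₁ × Fin d₂) (Fin d₀ × Fin d₁ × Fin d₂) ℂ) :
    Matrix (Fin d₀ × Fin d₂) (Fin d₀ × Fin d₂) ℂ :=
  Matrix.of fun p q => ∑ m : Fin d₁, A (p.1, m, p.2) (q.1, m, q.2)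

/-- The link-product composition
`Tr_{H₁}[ (𝟙_{d₀} ⊗ ϱ_{2|1})^{T_{H₁}} (ϱ_{1|0} ⊗ 𝟙_{d₂}) ]`. -/
def linkProd {d₀ d₁ d₂ : ℕ} (ϱ10 : Matrix (Fin d₀ × Fin d₁) (Fin d₀ × Fin d₁) ℂ)
    (ϱ21 : Matrix (Fin d₁ × Fin d₂) (Fin d₁ × Fin d₂) ℂ) :
    Matrix (Fin d₀ × Fin d₂) (Fin d₀ × Fin d₂) ℂ :=
  ptraceMid (ptransposeMid (emb12 ϱ21) * emb01 ϱ10)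

/-!
The partially transposed Jamiołkowski image of `N` is its Choi matrix,
`ϱ (i, k) (j, l) = N (|i⟩⟨j|) k l`, and `N ↦ ϱ` is a bijection between linear maps and matrices.
Under it, trace preservation becomes `Tr₂ ϱ = 𝟙`, complete positivity becomes `ϱ ≥ 0`
(Choi's theorem: feed the maximally entangled projector to `id ⊗ N`; conversely a decomposition
`ϱ = ∑ v v†` provides Kraus operators), and composition of maps becomes the link product.
-/

section Choi

variable {a b : ℕ}

def ofChoi (ϱ : Matrix (Fin a × Fin b) (Fin a × Fin b) ℂ) :
    Matrix (Fin a) (Fin a) ℂ →ₗ[ℂ] Matrix (Fin b) (Fin b) ℂ where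
  toFun X := Matrix.of fun k l => ∑ i, ∑ j, X i j * ϱ (i, k) (j, l)
  map_add' X Y := by ext; simp [add_mul, Finset.sum_add_distrib]
  map_smul' r X := by ext; simp [Finset.mul_sum, mul_assoc]

lemma ofChoi_apply (ϱ : Matrix (Fin a × Fin b) (Fin a × Fin b) ℂ)
    (X : Matrix (Fin a) (Fin a) ℂ) (k l : Fin b) :
    ofChoi ϱ X k l = ∑ i, ∑ j, X i j * ϱ (i, k) (j, l) := rfl

def choi (N : Matrix (Fin a) (Fin a) ℂ →ₗ[ℂ] Matrix (Fin b) (Fin b) ℂ) :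
    Matrix (Fin a × Fin b) (Fin a × Fin b) ℂ :=
  ptransposeA (jamImage N)

lemma choi_apply (N : Matrix (Fin a) (Fin a) ℂ →ₗ[ℂ] Matrix (Fin b) (Fin b) ℂ)
    (i j : Fin a) (k l : Fin b) :
    choi N (i, k) (j, l) = N (single i j 1) k l := by
  simp [choi, ptransposeA, jamImage, Matrix.sum_apply, single, ite_and]

lemma ofChoi_choi (N : Matrix (Fin a) (Fin a) ℂ →ₗ[ℂ] Matrix (Fin b) (Fin b) ℂ) :
    ofChoi (choi N) = N := by
  ext X k l
  have hX : X = ∑ i, ∑ j, X i j • single i j (1 : ℂ) := by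
    simpa only [smul_single, smul_eq_mul, mul_one] using matrix_eq_sum_single X
  conv_rhs => rw [hX]
  simp only [ofChoi_apply, choi_apply, map_sum, map_smul, Matrix.sum_apply, Matrix.smul_apply,
    smul_eq_mul]

lemma choi_ofChoi (ϱ : Matrix (Fin a × Fin b) (Fin a × Fin b) ℂ) : choi (ofChoi ϱ) = ϱ := by
  ext ⟨i, k⟩ ⟨j, l⟩
  simp [choi_apply, ofChoi_apply, single, ite_and]

lemma choi_injective :
    Function.Injective (choi : (Matrix (Fin a) (Fin a) ℂ →ₗ[ℂ] Matrix (Fin b) (Fin b) ℂ) → _) :=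
  Function.LeftInverse.injective ofChoi_choi

lemma isTP_iff_ptraceB_choi (N : Matrix (Fin a) (Fin a) ℂ →ₗ[ℂ] Matrix (Fin b) (Fin b) ℂ) :
    IsTP ⇑N ↔ ptraceB (choi N) = 1 := by
  constructor
  · intro h
    ext i j
    calc ptraceB (choi N) i j = (N (single i j 1)).trace := by simp [ptraceB, choi_apply, trace]
      _ = (single i j (1 : ℂ)).trace := h _
      _ = (1 : Matrix (Fin a) (Fin a) ℂ) i j := by
        rcases eq_or_ne i j with rfl | hij
        · simp
        · simp [trace_single_eq_of_ne (h := hij), one_apply_ne hij]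
  · intro h X
    rw [← ofChoi_choi N]
    have hdiag (i j : Fin a) : ∑ k, choi N (i, k) (j, k) = (1 : Matrix (Fin a) (Fin a) ℂ) i j := by
      rw [← h]; rfl
    simp only [trace, diag, ofChoi_apply]
    rw [Finset.sum_comm]
    simp [Finset.sum_comm (γ := Fin b), ← Finset.mul_sum, hdiag, one_apply]

def maxEntangled (a : ℕ) : Fin a × Fin a → ℂ := fun p => if p.1 = p.2 then 1 else 0

lemma idTensor_maxEntangled (N : Matrix (Fin a) (Fin a) ℂ →ₗ[ℂ] Matrix (Fin b) (Fin b) ℂ) :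
    idTensor ⇑N (vecMulVec (maxEntangled a) (star (maxEntangled a))) = choi N := by
  ext ⟨i, k⟩ ⟨j, l⟩
  rw [choi_apply]
  refine congrArg (fun M => N M k l) ?_
  ext i' j'
  by_cases hi : i = i' <;> by_cases hj : j = j' <;>
    simp [maxEntangled, vecMulVec_apply, single, hi, hj]

lemma IsCP.posSemidef_choi {N : Matrix (Fin a) (Fin a) ℂ →ₗ[ℂ] Matrix (Fin b) (Fin b) ℂ}
    (h : IsCP ⇑N) : (choi N).PosSemidef := by
  simpa only [idTensor_maxEntangled] using h a _ (posSemidef_vecMulVec_self_star (maxEntangled a))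

-- `kraus n v = 𝟙ₙ ⊗ V` with `V k i = v (i, k)`: the map whose Choi matrix is `v v†`
-- is `X ↦ V X V†`.
def kraus (n : ℕ) (v : Fin a × Fin b → ℂ) : Matrix (Fin n × Fin b) (Fin n × Fin a) ℂ :=
  of fun p q => if p.1 = q.1 then v (q.2, p.2) else 0

lemma idTensor_ofChoi_sum_vecMulVec {m n : ℕ} (v : Fin m → Fin a × Fin b → ℂ)
    (X : Matrix (Fin n × Fin a) (Fin n × Fin a) ℂ) :
    idTensor ⇑(ofChoi (∑ s, vecMulVec (v s) (star (v s)))) X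
      = ∑ s, kraus n (v s) * X * (kraus n (v s))ᴴ := by
  ext ⟨p, k⟩ ⟨q, l⟩
  simp only [idTensor, ofChoi_apply, of_apply, Matrix.sum_apply, vecMulVec_apply, Pi.star_apply,
    RCLike.star_def, Finset.mul_sum, kraus, mul_apply, ite_mul, zero_mul, Fintype.sum_prod_type,
    Finset.sum_ite_irrel, Finset.sum_const_zero, Finset.sum_ite_eq, Finset.mem_univ, ↓reduceIte,
    conjTranspose_apply, apply_ite (starRingEnd ℂ), map_zero, mul_ite, Finset.sum_mul, mul_zero]
  rw [Finset.sum_comm_cycle]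
  refine Finset.sum_congr rfl fun s _ => ?_
  rw [Finset.sum_comm]
  exact Finset.sum_congr rfl fun j _ => Finset.sum_congr rfl fun i _ => by ring

lemma isCP_ofChoi {ϱ : Matrix (Fin a × Fin b) (Fin a × Fin b) ℂ} (h : ϱ.PosSemidef) :
    IsCP ⇑(ofChoi ϱ) := by
  obtain ⟨m, v, rfl⟩ := posSemidef_iff_eq_sum_vecMulVec.1 h
  intro n X hX
  rw [idTensor_ofChoi_sum_vecMulVec]
  exact posSemidef_sum _ fun s _ => hX.mul_mul_conjTranspose_same _

theorem isCP_iff_posSemidef_choi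
    (N : Matrix (Fin a) (Fin a) ℂ →ₗ[ℂ] Matrix (Fin b) (Fin b) ℂ) :
    IsCP ⇑N ↔ (choi N).PosSemidef :=
  ⟨IsCP.posSemidef_choi, fun h => ofChoi_choi N ▸ isCP_ofChoi h⟩

end Choi

section LinkProduct

variable {d₀ d₁ d₂ : ℕ}

lemma linkProd_apply (ϱ10 : Matrix (Fin d₀ × Fin d₁) (Fin d₀ × Fin d₁) ℂ)
    (ϱ21 : Matrix (Fin d₁ × Fin d₂) (Fin d₁ × Fin d₂) ℂ) (i j : Fin d₀) (k l : Fin d₂) :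
    linkProd ϱ10 ϱ21 (i, k) (j, l) = ∑ m, ∑ n, ϱ10 (i, m) (j, n) * ϱ21 (m, k) (n, l) := by
  simp only [linkProd, ptraceMid, ptransposeMid, emb12, kroneckerMap_apply, one_apply, ite_mul,
    one_mul, zero_mul, emb01, mul_ite, mul_one, mul_zero, mul_apply, of_apply,
    Fintype.sum_prod_type, Finset.sum_ite_eq', Finset.mem_univ, ↓reduceIte, Finset.sum_ite_irrel,
    Finset.sum_const_zero, Finset.sum_ite_eq]
  rw [Finset.sum_comm]
  simp only [mul_comm]

lemma choi_comp (N10 : Matrix (Fin d₀) (Fin d₀) ℂ →ₗ[ℂ] Matrix (Fin d₁) (Fin d₁) ℂ)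
    (N21 : Matrix (Fin d₁) (Fin d₁) ℂ →ₗ[ℂ] Matrix (Fin d₂) (Fin d₂) ℂ) :
    choi (N21 ∘ₗ N10) = linkProd (choi N10) (choi N21) := by
  ext ⟨i, k⟩ ⟨j, l⟩
  rw [linkProd_apply, choi_apply, LinearMap.comp_apply]
  conv_lhs => rw [← ofChoi_choi N21]
  simp only [ofChoi_apply, choi_apply]

end LinkProduct

theorem statement6_general {d₀ d₁ d₂ : ℕ}
    (N10 : Matrix (Fin d₀) (Fin d₀) ℂ →ₗ[ℂ] Matrix (Fin d₁) (Fin d₁) ℂ)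
    (N20 : Matrix (Fin d₀) (Fin d₀) ℂ →ₗ[ℂ] Matrix (Fin d₂) (Fin d₂) ℂ) :
    (∃ N21 : Matrix (Fin d₁) (Fin d₁) ℂ →ₗ[ℂ] Matrix (Fin d₂) (Fin d₂) ℂ,
        IsCP ⇑N21 ∧ IsTP ⇑N21 ∧ N20 = N21 ∘ₗ N10) ↔
      (∃ ϱ21 : Matrix (Fin d₁ × Fin d₂) (Fin d₁ × Fin d₂) ℂ,
        ϱ21.PosSemidef ∧ ptraceB ϱ21 = 1 ∧
          ptransposeA (jamImage N20) = linkProd (ptransposeA (jamImage N10)) ϱ21) := by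
  constructor
  · rintro ⟨N21, hCP, hTP, rfl⟩
    exact ⟨choi N21, (isCP_iff_posSemidef_choi N21).1 hCP, (isTP_iff_ptraceB_choi N21).1 hTP,
      choi_comp N10 N21⟩
  · rintro ⟨ϱ21, hPSD, hTr, hLink⟩
    refine ⟨ofChoi ϱ21, isCP_ofChoi hPSD, ?_, choi_injective ?_⟩
    · rwa [isTP_iff_ptraceB_choi, choi_ofChoi]
    · rwa [choi_comp, choi_ofChoi]

/-- a CPTP intermediate map `N_{2|1}` with `N_{2|0} = N_{2|1} ∘ N_{1|0}`
exists iff there is a positive semidefinite `ϱ_{2|1}` with `Tr_{H₂}[ϱ_{2|1}] = 𝟙_{d₁}`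
satisfying `ϱ_{2|0} = Tr_{H₁}[ (𝟙_{d₀} ⊗ ϱ_{2|1})^{T_{H₁}} (ϱ_{1|0} ⊗ 𝟙_{d₂}) ]`. -/
theorem statement6 {d₀ d₁ d₂ : ℕ}
    (N10 : Matrix (Fin d₀) (Fin d₀) ℂ →ₗ[ℂ] Matrix (Fin d₁) (Fin d₁) ℂ)
    (N20 : Matrix (Fin d₀) (Fin d₀) ℂ →ₗ[ℂ] Matrix (Fin d₂) (Fin d₂) ℂ)
    (h10 : IsCP ⇑N10 ∧ IsTP ⇑N10)
    (h20 : IsCP ⇑N20 ∧ IsTP ⇑N20) :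
    (∃ N21 : Matrix (Fin d₁) (Fin d₁) ℂ →ₗ[ℂ] Matrix (Fin d₂) (Fin d₂) ℂ,
        IsCP ⇑N21 ∧ IsTP ⇑N21 ∧ N20 = N21 ∘ₗ N10) ↔
      (∃ ϱ21 : Matrix (Fin d₁ × Fin d₂) (Fin d₁ × Fin d₂) ℂ,
        ϱ21.PosSemidef ∧ ptraceB ϱ21 = 1 ∧
          ptransposeA (jamImage N20) = linkProd (ptransposeA (jamImage N10)) ϱ21) :=
  statement6_general N10 N20
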